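/- arXiv:1707.01365 — 3 statements merged into one kernel-verified Lean document; each statement's English description precedes it below -/
import Mathlib

section
/- Let P be a Markov kernel on a measurable space satisfying a Doeblin minorization P(x, A) ≥ ν·μ(A) for all x and measurable A, where μ is a probability measure and 0 < ν ≤ 1. Then for all probability measures μ₁, μ₂: ‖μ₁P − μ₂P‖_tv ≤ (1−ν)·‖μ₁−μ₂‖_tv. -/
/-!
Subtract the common part `ξ := ν • μ` from every `P x`: for measurable `A` the function
`g x := P x A - ξ A` takes values in `[0, 1 - ν]`, and `(ρ.bind P) A = ∫ g dρ + ξ A` for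
every probability measure `ρ`, so `(μ₁.bind P) A - (μ₂.bind P) A = ∫ g d(μ₁ - μ₂)`.
Integrating over a Hahn decomposition `S` of `μ₁ - μ₂` bounds this by
`(1 - ν) (μ₁ S - μ₂ S) ≤ (1 - ν) tvDist μ₁ μ₂`.
-/

open MeasureTheory ProbabilityTheory

open scoped ENNReal

/-- Total variation distance between two measures. -/
noncomputable def tvDist {Z : Type*} [MeasurableSpace Z] (μ ν : Measure Z) : ℝ :=
  ⨆ s : {s : Set Z // MeasurableSet s}, |(μ s.1).toReal - (ν s.1).toReal|

section Doeblin

variable {Z : Type*} [MeasurableSpace Z]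

section TotalVariation

variable {μ₁ μ₂ : Measure Z}

lemma bddAbove_abs_sub_measure [IsFiniteMeasure μ₁] [IsFiniteMeasure μ₂] :
    BddAbove (Set.range fun s : {s : Set Z // MeasurableSet s} =>
      |(μ₁ s.1).toReal - (μ₂ s.1).toReal|) := by
  refine ⟨μ₁.real Set.univ + μ₂.real Set.univ, ?_⟩
  rintro _ ⟨s, rfl⟩
  change |μ₁.real s.1 - μ₂.real s.1| ≤ _
  have h₁ := measureReal_mono (μ := μ₁) (Set.subset_univ s.1)
  have h₂ := measureReal_mono (μ := μ₂) (Set.subset_univ s.1)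
  rw [abs_sub_le_iff]
  constructor <;> linarith [measureReal_nonneg (μ := μ₁) (s := s.1),
    measureReal_nonneg (μ := μ₂) (s := s.1)]

lemma sub_le_tvDist [IsFiniteMeasure μ₁] [IsFiniteMeasure μ₂] {s : Set Z}
    (hs : MeasurableSet s) :
    (μ₁ s).toReal - (μ₂ s).toReal ≤ tvDist μ₁ μ₂ :=
  (le_abs_self _).trans <|
    le_ciSup bddAbove_abs_sub_measure (⟨s, hs⟩ : {s : Set Z // MeasurableSet s})

lemma tvDist_comm (μ₁ μ₂ : Measure Z) : tvDist μ₁ μ₂ = tvDist μ₂ μ₁ :=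
  iSup_congr fun _ => abs_sub_comm _ _

lemma tvDist_le_of_forall_sub_le {d : ℝ}
    (h₁₂ : ∀ s, MeasurableSet s → (μ₁ s).toReal - (μ₂ s).toReal ≤ d)
    (h₂₁ : ∀ s, MeasurableSet s → (μ₂ s).toReal - (μ₁ s).toReal ≤ d) :
    tvDist μ₁ μ₂ ≤ d :=
  ciSup_le fun s => abs_sub_le_iff.2 ⟨h₁₂ s.1 s.2, h₂₁ s.1 s.2⟩

end TotalVariation

section BoundedIntegrand

variable {g : Z → ℝ≥0∞} {c : ℝ≥0∞}

lemma restrict_le_restrict_of_forall_subset {α β : Measure Z} {T : Set Z}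
    (hT : MeasurableSet T) (h : ∀ t, MeasurableSet t → t ⊆ T → α t ≤ β t) :
    α.restrict T ≤ β.restrict T :=
  Measure.le_iff.2 fun t ht => by
    rw [Measure.restrict_apply ht, Measure.restrict_apply ht]
    exact h _ (ht.inter hT) Set.inter_subset_right

lemma lintegral_add_mul_measure_univ_le_of_le {α β : Measure Z} (hαβ : α ≤ β)
    (hg : Measurable g) (hgc : ∀ x, g x ≤ c) :
    ∫⁻ x, g x ∂β + c * α Set.univ ≤ ∫⁻ x, g x ∂α + c * β Set.univ := by
  have split (ρ : Measure Z) :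
      c * ρ Set.univ = ∫⁻ x, g x ∂ρ + ∫⁻ x, (c - g x) ∂ρ := by
    rw [← lintegral_const, ← lintegral_add_left hg]
    exact lintegral_congr fun x => (add_tsub_cancel_of_le (hgc x)).symm
  calc ∫⁻ x, g x ∂β + c * α Set.univ
      = ∫⁻ x, g x ∂β + (∫⁻ x, g x ∂α + ∫⁻ x, (c - g x) ∂α) := by rw [split α]
    _ ≤ ∫⁻ x, g x ∂β + (∫⁻ x, g x ∂α + ∫⁻ x, (c - g x) ∂β) := by gcongr
    _ = ∫⁻ x, g x ∂α + c * β Set.univ := by rw [split β]; ring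

lemma lintegral_ne_top_of_le (ρ : Measure Z) [IsFiniteMeasure ρ] (hc : c ≠ ∞)
    (hgc : ∀ x, g x ≤ c) : ∫⁻ x, g x ∂ρ ≠ ∞ :=
  ne_top_of_le_ne_top (by rw [lintegral_const]; exact ENNReal.mul_ne_top hc (measure_ne_top _ _))
    (lintegral_mono hgc)

lemma toReal_lintegral_sub_le_mul_tvDist (μ₁ μ₂ : Measure Z) [IsFiniteMeasure μ₁]
    [IsFiniteMeasure μ₂] (hg : Measurable g) (hc : c ≠ ∞) (hgc : ∀ x, g x ≤ c) :
    (∫⁻ x, g x ∂μ₁).toReal - (∫⁻ x, g x ∂μ₂).toReal ≤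
      c.toReal * tvDist μ₁ μ₂ := by
  obtain ⟨S, hS, hpos, hneg⟩ := hahn_decomposition μ₁ μ₂
  have on_S := lintegral_add_mul_measure_univ_le_of_le
    (restrict_le_restrict_of_forall_subset hS hpos) hg hgc
  have on_Sc : ∫⁻ x in Sᶜ, g x ∂μ₁ ≤ ∫⁻ x in Sᶜ, g x ∂μ₂ :=
    lintegral_mono' (restrict_le_restrict_of_forall_subset hS.compl hneg) le_rfl
  rw [Measure.restrict_apply_univ, Measure.restrict_apply_univ] at on_S
  have main : ∫⁻ x, g x ∂μ₁ + c * μ₂ S ≤ ∫⁻ x, g x ∂μ₂ + c * μ₁ S := by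
    rw [← lintegral_add_compl g hS (μ := μ₁), ← lintegral_add_compl g hS (μ := μ₂)]
    calc _ = (∫⁻ x in S, g x ∂μ₁ + c * μ₂ S) + ∫⁻ x in Sᶜ, g x ∂μ₁ := by ring
      _ ≤ (∫⁻ x in S, g x ∂μ₂ + c * μ₁ S) + ∫⁻ x in Sᶜ, g x ∂μ₂ :=
          add_le_add on_S on_Sc
      _ = _ := by ring
  have hcS (ρ : Measure Z) [IsFiniteMeasure ρ] : c * ρ S ≠ ∞ :=
    ENNReal.mul_ne_top hc (measure_ne_top ρ S)
  have mainR := ENNReal.toReal_mono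
    (ENNReal.add_ne_top.2 ⟨lintegral_ne_top_of_le μ₂ hc hgc, hcS μ₁⟩) main
  rw [ENNReal.toReal_add (lintegral_ne_top_of_le μ₁ hc hgc) (hcS μ₂),
    ENNReal.toReal_add (lintegral_ne_top_of_le μ₂ hc hgc) (hcS μ₁),
    ENNReal.toReal_mul, ENNReal.toReal_mul] at mainR
  calc _ ≤ c.toReal * ((μ₁ S).toReal - (μ₂ S).toReal) := by rw [mul_sub]; linarith
    _ ≤ c.toReal * tvDist μ₁ μ₂ :=
        mul_le_mul_of_nonneg_left (sub_le_tvDist hS) ENNReal.toReal_nonneg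

end BoundedIntegrand

section Minorization

variable {P : Kernel Z Z} {ξ : Measure Z} {A : Set Z}

lemma measure_sub_le_one_sub_measure_univ [IsFiniteMeasure ξ] {p : Measure Z}
    [IsProbabilityMeasure p] (hξp : ξ ≤ p) (hA : MeasurableSet A) :
    p A - ξ A ≤ 1 - ξ Set.univ := by
  rw [← Measure.sub_apply hA hξp, ← measure_univ (μ := p),
    ← Measure.sub_apply MeasurableSet.univ hξp]
  exact measure_mono (Set.subset_univ A)

lemma bind_apply_eq_lintegral_sub_add (hξP : ∀ x, ξ ≤ P x) (ρ : Measure Z)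
    [IsProbabilityMeasure ρ] (hA : MeasurableSet A) :
    (ρ.bind P) A = ∫⁻ x, (P x A - ξ A) ∂ρ + ξ A := by
  calc (ρ.bind P) A = ∫⁻ x, (P x A - ξ A + ξ A) ∂ρ := by
        rw [Measure.bind_apply hA P.measurable.aemeasurable]
        exact lintegral_congr fun x => (tsub_add_cancel_of_le (hξP x A)).symm
    _ = ∫⁻ x, (P x A - ξ A) ∂ρ + ξ A := by
        rw [lintegral_add_right _ measurable_const, lintegral_const, measure_univ, mul_one]

lemma toReal_bind_sub_le_of_forall_le [IsMarkovKernel P] [IsFiniteMeasure ξ]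
    (hξP : ∀ x, ξ ≤ P x) (μ₁ μ₂ : Measure Z)
    [IsProbabilityMeasure μ₁] [IsProbabilityMeasure μ₂] (hA : MeasurableSet A) :
    ((μ₁.bind P) A).toReal - ((μ₂.bind P) A).toReal ≤
      (1 - ξ Set.univ).toReal * tvDist μ₁ μ₂ := by
  have hc : 1 - ξ Set.univ ≠ ∞ := ENNReal.sub_ne_top ENNReal.one_ne_top
  have hgc (x : Z) : P x A - ξ A ≤ 1 - ξ Set.univ :=
    measure_sub_le_one_sub_measure_univ (hξP x) hA
  have hfin (ρ : Measure Z) [IsProbabilityMeasure ρ] := lintegral_ne_top_of_le ρ hc hgc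
  rw [bind_apply_eq_lintegral_sub_add hξP μ₁ hA, bind_apply_eq_lintegral_sub_add hξP μ₂ hA,
    ENNReal.toReal_add (hfin μ₁) (measure_ne_top ξ A),
    ENNReal.toReal_add (hfin μ₂) (measure_ne_top ξ A), add_sub_add_right_eq_sub]
  exact toReal_lintegral_sub_le_mul_tvDist μ₁ μ₂
    ((P.measurable_coe hA).sub measurable_const) hc hgc

lemma tvDist_bind_le_of_forall_le [IsMarkovKernel P] [IsFiniteMeasure ξ]
    (hξP : ∀ x, ξ ≤ P x) (μ₁ μ₂ : Measure Z)
    [IsProbabilityMeasure μ₁] [IsProbabilityMeasure μ₂] :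
    tvDist (μ₁.bind P) (μ₂.bind P) ≤ (1 - ξ Set.univ).toReal * tvDist μ₁ μ₂ :=
  tvDist_le_of_forall_sub_le (fun _ hA => toReal_bind_sub_le_of_forall_le hξP μ₁ μ₂ hA)
    fun _ hA => tvDist_comm μ₁ μ₂ ▸ toReal_bind_sub_le_of_forall_le hξP μ₂ μ₁ hA

end Minorization

end Doeblin

theorem doeblin_contraction {Z : Type*} [MeasurableSpace Z]
    (P : Kernel Z Z) [IsMarkovKernel P]
    (μ : Measure Z) [IsProbabilityMeasure μ]
    (ν : ℝ) (hν0 : 0 < ν) (hν1 : ν ≤ 1)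
    (hmin : ∀ x : Z, ∀ A : Set Z, MeasurableSet A →
      ENNReal.ofReal ν * μ A ≤ P x A)
    (μ₁ μ₂ : Measure Z) [IsProbabilityMeasure μ₁] [IsProbabilityMeasure μ₂] :
    tvDist (μ₁.bind P) (μ₂.bind P) ≤ (1 - ν) * tvDist μ₁ μ₂ := by
  -- `ENNReal.ofReal ν` unfolds to `↑ν.toNNReal`, so `hmin` already states this.
  have hξP (x : Z) : ν.toNNReal • μ ≤ P x := Measure.le_iff.2 fun A hA => hmin x A hA
  have hξ : (1 - (ν.toNNReal • μ) Set.univ).toReal = 1 - ν := by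
    rw [Measure.smul_apply, measure_univ, ENNReal.smul_def, smul_eq_mul, mul_one,
      ENNReal.toReal_sub_of_le (by simpa using hν1) ENNReal.one_ne_top, ENNReal.toReal_one,
      ENNReal.coe_toReal, Real.coe_toNNReal ν hν0.le]
  simpa only [hξ] using tvDist_bind_le_of_forall_le hξP μ₁ μ₂
end

section
/- In the hidden-variable model where V₁,…,V_{n+1} are i.i.d. with law π_V and X₁,…,X_n satisfy P(X_i = x | V) = K_i(x,V_i,V_{i+1}) with ν_i ≤ K_i ≤ 1, for any q ≥ 1 and q ≤ k < n, the backward conditional kernel P(V_k ∈ · | V_{k+1}, X_{q:n}) satisfies a Doeblin minorization: there exists a probability measure μ_{k,q} (depending on X_{q:k-1}) such that P(V_k ∈ A | V_{k+1}, X_{q:n}) ≥ ν_k · μ_{k,q}(A) for all measurable A. -/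
open MeasureTheory

/-- `alphaAux π K x m k v` : conditional probability of observing `x (k-m), …, x (k-1)`
given that the latent variable with index `k` equals `v`, in the model where the
latent variables are i.i.d. with law `π` and `P(X_i = y | V) = K i y V_i V_{i+1}`. -/
noncomputable def alphaAux {V 𝕏 : Type*} [MeasurableSpace V] (π : Measure V)
    (K : ℕ → 𝕏 → V → V → ℝ) (x : ℕ → 𝕏) : ℕ → ℕ → V → ℝ
  | 0, _, _ => 1
  | m + 1, k, v => ∫ u, K (k - 1) (x (k - 1)) u v * alphaAux π K x m (k - 1) u ∂π

/-- The backward kernel `P(V_k ∈ A | V_{k+1} = w, X_{q:n} = x_{q:n})`.  (By conditional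
independence it only depends on `x_{q:k}`.) -/
noncomputable def backKer {V 𝕏 : Type*} [MeasurableSpace V] (π : Measure V)
    (K : ℕ → 𝕏 → V → V → ℝ) (x : ℕ → 𝕏) (q k : ℕ) (w : V) (A : Set V) : ℝ :=
  (∫ v, A.indicator (fun _ => (1 : ℝ)) v * (K k (x k) v w * alphaAux π K x (k - q) k v) ∂π) /
    (∫ v, K k (x k) v w * alphaAux π K x (k - q) k v ∂π)

/-- The minorizing measure `μ_{k,q}(A)`. -/
noncomputable def minorMeas {V 𝕏 : Type*} [MeasurableSpace V] (π : Measure V)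
    (K : ℕ → 𝕏 → V → V → ℝ) (x : ℕ → 𝕏) (q k : ℕ) (A : Set V) : ℝ :=
  (∫ v, A.indicator (fun _ => (1 : ℝ)) v * alphaAux π K x (k - q) k v ∂π) /
    (∫ v, alphaAux π K x (k - q) k v ∂π)

/-!
Write `α = alphaAux π K x (k - q) k`, the likelihood of `x_{q:k-1}` given `V_k`. Both
`μ_{k,q}` and the backward kernel are normalised `π`-densities: `α` and `K_k(x_k, ·, w) α`.
The pointwise bounds `ν_k α ≤ K_k(x_k, ·, w) α ≤ α` make the numerator of the kernel at
least `ν_k` times that of `μ_{k,q}`, and its normaliser at most that of `μ_{k,q}`.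
-/

section

variable {V : Type*} [MeasurableSpace V] {μ : Measure V}

lemma integral_mem_Icc_zero_one [IsProbabilityMeasure μ] {f : V → ℝ} (hf : Measurable f)
    (hf01 : ∀ v, f v ∈ Set.Icc 0 1) : ∫ v, f v ∂μ ∈ Set.Icc 0 1 :=
  ⟨integral_nonneg fun v => (hf01 v).1,
    (integral_mono (.of_mem_Icc 0 1 hf.aemeasurable (ae_of_all _ hf01)) (integrable_const 1)
      fun v => (hf01 v).2).trans_eq (by simp)⟩

lemma ratio_minorization {f g : V → ℝ} {c : ℝ} (hf : Integrable f μ) (hg : Integrable g μ)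
    (hf0 : ∀ v, 0 ≤ f v) (hcg : ∀ v, c * g v ≤ f v) (hfg : ∀ v, f v ≤ g v)
    {A : Set V} (hA : MeasurableSet A) :
    c * ((∫ v, A.indicator (fun _ => (1 : ℝ)) v * g v ∂μ) / ∫ v, g v ∂μ) ≤
      (∫ v, A.indicator (fun _ => (1 : ℝ)) v * f v ∂μ) / ∫ v, f v ∂μ := by
  have indicator_one_mul (h : V → ℝ) :
      (fun v => A.indicator (fun _ => (1 : ℝ)) v * h v) = A.indicator h := by
    ext v; simpa using (Set.indicator_mul_left A (fun _ => (1 : ℝ)) h).symm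
  simp only [indicator_one_mul, integral_indicator hA]
  have hnum : c * ∫ v in A, g v ∂μ ≤ ∫ v in A, f v ∂μ := by
    rw [← integral_const_mul]
    exact setIntegral_mono_on (hg.integrableOn.const_mul c) hf.integrableOn hA fun v _ => hcg v
  have hnum_le : ∫ v in A, f v ∂μ ≤ ∫ v, f v ∂μ :=
    setIntegral_le_integral hf (ae_of_all _ hf0)
  have hden : ∫ v, f v ∂μ ≤ ∫ v, g v ∂μ := integral_mono hf hg hfg
  rw [mul_div_assoc']
  rcases (integral_nonneg (μ := μ) (f := f) hf0).eq_or_lt with hzero | hpos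
  · rw [← hzero, div_zero]
    exact div_nonpos_of_nonpos_of_nonneg (hnum.trans (hzero ▸ hnum_le)) (hzero ▸ hden)
  · exact div_le_div₀ (setIntegral_nonneg hA fun v _ => hf0 v) hnum hpos hden

end

lemma alphaAux_measurable_and_mem_Icc {V 𝕏 : Type*} [MeasurableSpace V] (π : Measure V)
    [IsProbabilityMeasure π] (K : ℕ → 𝕏 → V → V → ℝ)
    (hKmeas : ∀ i (y : 𝕏), Measurable fun p : V × V => K i y p.1 p.2)
    (hK01 : ∀ i (y : 𝕏) (v w : V), K i y v w ∈ Set.Icc 0 1) (x : ℕ → 𝕏) (m k : ℕ) :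
    Measurable (alphaAux π K x m k) ∧ ∀ v, alphaAux π K x m k v ∈ Set.Icc 0 1 := by
  induction m generalizing k with
  | zero => exact ⟨measurable_const, fun _ => ⟨zero_le_one, le_rfl⟩⟩
  | succ m ih =>
    obtain ⟨hαm, hα01⟩ := ih (k - 1)
    have hjoint : Measurable fun p : V × V =>
        K (k - 1) (x (k - 1)) p.1 p.2 * alphaAux π K x m (k - 1) p.1 :=
      (hKmeas _ _).mul (hαm.comp measurable_fst)
    refine ⟨hjoint.stronglyMeasurable.integral_prod_left'.measurable, fun v =>
      integral_mem_Icc_zero_one (hjoint.comp measurable_prodMk_right) fun u =>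
        unitInterval.mul_mem (hK01 ..) (hα01 u)⟩

theorem backward_doeblin_general {V 𝕏 : Type*} [MeasurableSpace V]
    (π : Measure V) [IsProbabilityMeasure π]
    (K : ℕ → 𝕏 → V → V → ℝ) (ν : ℕ → ℝ)
    (hKmeas : ∀ i (y : 𝕏), Measurable fun p : V × V => K i y p.1 p.2)
    (hν : ∀ i, 0 < ν i)
    (hKlb : ∀ i (y : 𝕏) (v w : V), ν i ≤ K i y v w)
    (hKub : ∀ i (y : 𝕏) (v w : V), K i y v w ≤ 1)
    (x : ℕ → 𝕏) (q k : ℕ) :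
    ∀ w : V, ∀ A : Set V, MeasurableSet A →
      ν k * minorMeas π K x q k A ≤ backKer π K x q k w A := by
  intro w A hA
  have hK01 i y u v : K i y u v ∈ Set.Icc 0 1 := ⟨(hν i).le.trans (hKlb ..), hKub ..⟩
  obtain ⟨hαm, hα01⟩ := alphaAux_measurable_and_mem_Icc π K hKmeas hK01 x (k - q) k
  have hKα01 v : K k (x k) v w * alphaAux π K x (k - q) k v ∈ Set.Icc 0 1 :=
    unitInterval.mul_mem (hK01 ..) (hα01 v)
  exact ratio_minorization
    (.of_mem_Icc 0 1 (((hKmeas k (x k)).comp measurable_prodMk_right).mul hαm).aemeasurable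
      (ae_of_all _ hKα01))
    (.of_mem_Icc 0 1 hαm.aemeasurable (ae_of_all _ hα01))
    (fun v => (hKα01 v).1) (fun v => mul_le_mul_of_nonneg_right (hKlb ..) (hα01 v).1)
    (fun v => mul_le_of_le_one_left (hα01 v).1 (hKub ..)) hA

theorem backward_doeblin {V 𝕏 : Type*} [MeasurableSpace V] [Countable 𝕏]
    (π : Measure V) [IsProbabilityMeasure π]
    (K : ℕ → 𝕏 → V → V → ℝ) (ν : ℕ → ℝ)
    (hKmeas : ∀ i (y : 𝕏), Measurable fun p : V × V => K i y p.1 p.2)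
    (hKsum : ∀ i (v w : V), HasSum (fun y : 𝕏 => K i y v w) 1)
    (hν : ∀ i, 0 < ν i)
    (hKlb : ∀ i (y : 𝕏) (v w : V), ν i ≤ K i y v w)
    (hKub : ∀ i (y : 𝕏) (v w : V), K i y v w ≤ 1)
    (x : ℕ → 𝕏) (q k n : ℕ) (hq : 1 ≤ q) (hqk : q ≤ k) (hkn : k < n) :
    ∀ w : V, ∀ A : Set V, MeasurableSet A →
      ν k * minorMeas π K x q k A ≤ backKer π K x q k w A :=
  backward_doeblin_general π K ν hKmeas hν hKlb hKub x q k
end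

section
/- In the round-robin graph E^{n,N}_RR with 2 ≤ n < N/4 and N even, let V_q denote the set of nodes at graph distance q from node 1. Then |V_0| = 1, |V_1| = n, and |V_q| = 2(n−1) for all 2 ≤ q ≤ Q, where Q is the quotient of (N/2 − 1) by (n−1). Moreover V_1 = {2x : x = 1,…,n} and for 2 ≤ q ≤ Q, V_q = {2x+1 : (q−2)(n−1)+1 ≤ x ≤ (q−1)(n−1)} ∪ {2x : 2+(q−1)(n−1) ≤ x ≤ 1+q(n−1)}. -/
/-!
Write `N = 2M`. Besides node `1`, the nodes are the evens `2x` (`1 ≤ x ≤ M`) and the odds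
`2x + 1` (`1 ≤ x < M`). In the first `n` rounds node `1` meets `2, …, 2n`; two evens `2u, 2v`
meet only if `u + v ≤ 2n`; an odd `2x + 1` meets the evens `2(x + d)` with `d` odd, `d < 2n`;
and two odds meet only at the far end of the cycle (`x ≥ M + 2 - 2n`). Give `2x` the level
`⌊(x - 2)/(n - 1)⌋ + 1` and `2x + 1` the level `⌊(x - 1)/(n - 1)⌋ + 2`. Capped at `Q + 1`, the
level changes by at most one along every edge, so it bounds the distance from below; and every
node other than `1` has a neighbour one level lower, so each level is realised by a walk. Hence
distance and level agree up to `Q`, and the layers are read off the level formula.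
-/

/-- `rrCycle N j` : the node sitting at cyclic position `j` in the initial
round-robin arrangement of the `N` nodes (`N` even).  Position `0` holds the fixed
node `1`; the cycle runs along the top row `1, 3, …, N-1` and then back along the
bottom row `N, N-2, …, 2`. -/
def rrCycle (N j : ℕ) : ℕ := if j ≤ N / 2 - 1 then 2 * j + 1 else 2 * (N - j)

/-- `rrNodeAt N t j` : the node sitting at cyclic position `j` during round `t ≥ 1`
of the round-robin scheduling: node `1` stays at position `0` and all other nodes
rotate one step at each round. -/
def rrNodeAt (N t j : ℕ) : ℕ :=
  if j = 0 then 1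
  else rrCycle N (1 + (j - 1 + ((N - 1) - (t - 1) % (N - 1))) % (N - 1))

/-- The pairing relation produced by the first `n` rounds of the round-robin
scheduling: at each round, the node at position `j` plays the node at the facing
position `N - 1 - j`. -/
def rrRel (n N a b : ℕ) : Prop :=
  ∃ t ∈ Finset.Icc 1 n, ∃ j ∈ Finset.range (N / 2),
    a = rrNodeAt N t j ∧ b = rrNodeAt N t (N - 1 - j)

/-- The round-robin graph `E^{n,N}_RR` on the nodes `1, …, N`. -/
def rrGraph (n N : ℕ) : SimpleGraph ℕ := SimpleGraph.fromRel (rrRel n N)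

namespace SimpleGraph

variable {V : Type*} {G : SimpleGraph V} {f : V → ℕ}

theorem Walk.apply_le_apply_add_length (hf : ∀ a b, G.Adj a b → f b ≤ f a + 1) {u v : V}
    (p : G.Walk u v) : f v ≤ f u + p.length := by
  induction p with
  | nil => simp
  | cons h p ih =>
    have := hf _ _ h
    rw [Walk.length_cons]
    omega

theorem Reachable.apply_le_apply_add_dist (hf : ∀ a b, G.Adj a b → f b ≤ f a + 1) {u v : V}
    (h : G.Reachable u v) : f v ≤ f u + G.dist u v := by
  obtain ⟨p, hp⟩ := h.exists_walk_length_eq_dist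
  exact hp ▸ p.apply_le_apply_add_length hf

theorem exists_walk_length_eq_of_exists_adj_pred {S : Set V} {r : V} (hr : f r = 0)
    (hpred : ∀ v ∈ S, v ≠ r → ∃ u ∈ S, G.Adj u v ∧ f u + 1 = f v) {v : V} (hv : v ∈ S) :
    ∃ p : G.Walk r v, p.length = f v := by
  induction h : f v using Nat.strong_induction_on generalizing v with
  | _ k ih =>
    by_cases hvr : v = r
    · subst hvr
      exact ⟨Walk.nil, by simp [hr, ← h]⟩
    · obtain ⟨u, hu, hadj, hfu⟩ := hpred v hv hvr
      obtain ⟨p, hp⟩ := ih (f u) (by omega) hu rfl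
      exact ⟨p.concat hadj, by rw [Walk.length_concat, hp, hfu, h]⟩

end SimpleGraph

theorem Nat.div_eq_iff_mul_le_and_lt {a k q : ℕ} (hk : 0 < k) :
    a / k = q ↔ q * k ≤ a ∧ a < (q + 1) * k := by
  rw [Nat.div_eq_iff hk, add_one_mul]
  omega

theorem rrCycle_of_lt {N k : ℕ} (hk : k < N / 2) : rrCycle N k = 2 * k + 1 :=
  if_pos (by omega)

theorem rrCycle_sub {N x : ℕ} (hx : 1 ≤ x) (hxN : x ≤ N / 2) : rrCycle N (N - x) = 2 * x := by
  rw [rrCycle, if_neg (by omega)]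
  omega

theorem rrNodeAt_zero (N t : ℕ) : rrNodeAt N t 0 = 1 := rfl

theorem rrNodeAt_of_lt {N t j : ℕ} (hj : 1 ≤ j) (hjt : j < t) (htN : t < N) :
    rrNodeAt N t j = rrCycle N (N - (t - j)) := by
  rw [rrNodeAt, if_neg (by omega), Nat.mod_eq_of_lt (show t - 1 < N - 1 by omega),
    Nat.mod_eq_of_lt (by omega)]
  congr 1
  omega

theorem rrNodeAt_of_le {N t j : ℕ} (ht : 1 ≤ t) (htj : t ≤ j) (hjN : j < N) :
    rrNodeAt N t j = rrCycle N (j - t + 1) := by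
  rw [rrNodeAt, if_neg (by omega), Nat.mod_eq_of_lt (show t - 1 < N - 1 by omega),
    Nat.mod_eq_sub_mod (by omega), Nat.mod_eq_of_lt (by omega)]
  congr 1
  omega

section

variable {n M : ℕ}

theorem rrNodeAt_opposite {t j : ℕ} (ht : 1 ≤ t) (htM : t ≤ M) (hj : j < M) :
    rrNodeAt (2 * M) t (2 * M - 1 - j) = rrCycle (2 * M) (2 * M - (j + t)) := by
  rw [rrNodeAt_of_le ht (by omega) (by omega)]
  congr 1
  omega

theorem rrRel_of_round {t j : ℕ} (ht : 1 ≤ t) (htn : t ≤ n) (hj : j < M) :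
    rrRel n (2 * M) (rrNodeAt (2 * M) t j) (rrNodeAt (2 * M) t (2 * M - 1 - j)) :=
  ⟨t, Finset.mem_Icc.2 ⟨ht, htn⟩, j, Finset.mem_range.2 (by omega), rfl, rfl⟩

theorem rrGraph_adj_one_two_mul (hM : n < M) {t : ℕ} (ht : 1 ≤ t) (htn : t ≤ n) :
    (rrGraph n (2 * M)).Adj 1 (2 * t) := by
  have h := rrRel_of_round ht htn (show 0 < M by omega)
  rw [rrNodeAt_zero, rrNodeAt_opposite ht (by omega) (by omega), zero_add,
    rrCycle_sub ht (by omega)] at h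
  exact (SimpleGraph.fromRel_adj _ _ _).2 ⟨by omega, Or.inl h⟩

theorem rrGraph_adj_two_mul (hM : 2 * n < M) {t j : ℕ} (hj : 1 ≤ j) (hjt : j < t)
    (htn : t ≤ n) :
    (rrGraph n (2 * M)).Adj (2 * (t - j)) (2 * (t + j)) := by
  have h := rrRel_of_round (by omega) htn (show j < M by omega)
  rw [rrNodeAt_of_lt hj hjt (by omega), rrCycle_sub (N := 2 * M) (by omega) (by omega),
    rrNodeAt_opposite (by omega) (by omega) (by omega),
    rrCycle_sub (N := 2 * M) (by omega) (by omega), add_comm j] at h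
  exact (SimpleGraph.fromRel_adj _ _ _).2 ⟨by omega, Or.inl h⟩

theorem rrGraph_adj_odd_two_mul {x d : ℕ} (hx : 1 ≤ x) (hd : Odd d) (hdn : d < 2 * n)
    (hxd : x + d ≤ M) : (rrGraph n (2 * M)).Adj (2 * x + 1) (2 * (x + d)) := by
  obtain ⟨s, rfl⟩ := hd
  have h := rrRel_of_round (n := n) (M := M) (t := s + 1) (j := x + s) (by omega) (by omega)
    (by omega)
  rw [rrNodeAt_of_le (t := s + 1) (j := x + s) (by omega) (by omega) (by omega),
    rrCycle_of_lt (N := 2 * M) (by omega),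
    rrNodeAt_opposite (t := s + 1) (by omega) (by omega) (by omega),
    rrCycle_sub (N := 2 * M) (by omega) (by omega),
    show x + s - (s + 1) + 1 = x by omega, show x + s + (s + 1) = x + (2 * s + 1) by omega] at h
  exact (SimpleGraph.fromRel_adj _ _ _).2 ⟨by omega, Or.inl h⟩

theorem rrRel_cases (hM : 2 * n < M) {a b : ℕ} (h : rrRel n (2 * M) a b) :
    (a = 1 ∧ ∃ t, 1 ≤ t ∧ t ≤ n ∧ b = 2 * t) ∨
    (∃ u v, a = 2 * u ∧ b = 2 * v ∧ 1 ≤ u ∧ 1 ≤ v ∧ u + v ≤ 2 * n) ∨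
    (∃ x d, a = 2 * x + 1 ∧ b = 2 * (x + d) ∧ 1 ≤ x ∧ 1 ≤ d ∧ d < 2 * n) ∨
    (∃ x y, a = 2 * x + 1 ∧ b = 2 * y + 1 ∧ M + 2 - 2 * n ≤ x ∧ M + 2 - 2 * n ≤ y) := by
  obtain ⟨t, ht, j, hj, rfl, rfl⟩ := h
  rw [Finset.mem_Icc] at ht
  rw [Finset.mem_range, Nat.mul_div_cancel_left _ two_pos] at hj
  rw [rrNodeAt_opposite ht.1 (by omega) hj]
  have hfar : j + t ≤ M → rrCycle (2 * M) (2 * M - (j + t)) = 2 * (j + t) :=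
    fun h => rrCycle_sub (by omega) (by omega)
  rcases Nat.eq_zero_or_pos j with rfl | hj0
  · exact Or.inl ⟨rrNodeAt_zero _ _, t, ht.1, ht.2, by rw [hfar (by omega), zero_add]⟩
  rcases lt_or_ge j t with hjt | htj
  · rw [rrNodeAt_of_lt hj0 hjt (by omega), rrCycle_sub (by omega) (by omega), hfar (by omega)]
    exact Or.inr (Or.inl ⟨t - j, j + t, rfl, rfl, by omega, by omega, by omega⟩)
  rw [rrNodeAt_of_le ht.1 htj (by omega), rrCycle_of_lt (by omega)]
  rcases le_or_gt (j + t) M with hjtM | hjtM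
  · refine Or.inr (Or.inr (Or.inl ⟨j - t + 1, 2 * t - 1, rfl, ?_, by omega, by omega, by omega⟩))
    rw [hfar hjtM]
    congr 1
    omega
  · rw [rrCycle_of_lt (by omega)]
    exact Or.inr (Or.inr (Or.inr ⟨j - t + 1, 2 * M - (j + t), rfl, rfl, by omega, by omega⟩))

end

/-- Agrees with the distance from node `1` only up to level `(N/2 - 1) / (n - 1)`: beyond it the
odd–odd edges at the far end of the cycle are shortcuts. -/
def rrLevel (n v : ℕ) : ℕ :=
  if v = 1 then 0
  else if v % 2 = 0 then (v / 2 - 2) / (n - 1) + 1 else (v / 2 - 1) / (n - 1) + 2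

theorem rrLevel_one (n : ℕ) : rrLevel n 1 = 0 := rfl

theorem rrLevel_two_mul (n x : ℕ) : rrLevel n (2 * x) = (x - 2) / (n - 1) + 1 := by
  rw [rrLevel, if_neg (by omega), if_pos (by omega), Nat.mul_div_cancel_left x two_pos]

theorem rrLevel_two_mul_add_one (n : ℕ) {x : ℕ} (hx : 1 ≤ x) :
    rrLevel n (2 * x + 1) = (x - 1) / (n - 1) + 2 := by
  rw [rrLevel, if_neg (by omega), if_neg (by omega), show (2 * x + 1) / 2 = x by omega]

theorem two_le_rrLevel_two_mul_add_one (n : ℕ) {x : ℕ} (hx : 1 ≤ x) :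
    2 ≤ rrLevel n (2 * x + 1) := by
  rw [rrLevel_two_mul_add_one n hx]
  exact Nat.le_add_left 2 _

section

variable {n M x q : ℕ}

theorem rrLevel_two_mul_eq_iff (hn : 2 ≤ n) :
    rrLevel n (2 * x) = q + 1 ↔ q * (n - 1) ≤ x - 2 ∧ x - 2 < (q + 1) * (n - 1) := by
  rw [rrLevel_two_mul, Nat.add_right_cancel_iff, Nat.div_eq_iff_mul_le_and_lt (by omega)]

theorem rrLevel_two_mul_eq_one_iff (hn : 2 ≤ n) : rrLevel n (2 * x) = 1 ↔ x ≤ n := by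
  rw [show (1 : ℕ) = 0 + 1 from rfl, rrLevel_two_mul_eq_iff hn, zero_mul, zero_add, one_mul]
  omega

theorem rrLevel_two_mul_add_one_eq_iff (hn : 2 ≤ n) (hx : 1 ≤ x) :
    rrLevel n (2 * x + 1) = q + 2 ↔ q * (n - 1) ≤ x - 1 ∧ x - 1 < (q + 1) * (n - 1) := by
  rw [rrLevel_two_mul_add_one n hx, Nat.add_right_cancel_iff,
    Nat.div_eq_iff_mul_le_and_lt (by omega)]

theorem rrLevel_two_mul_mem_Icc (hn : 2 ≤ n) (hx : x < 2 * n) :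
    rrLevel n (2 * x) ∈ Set.Icc 1 2 := by
  have : (x - 2) / (n - 1) < 2 := Nat.div_lt_of_lt_mul (by omega)
  rw [rrLevel_two_mul]
  exact ⟨Nat.le_add_left _ _, by omega⟩

theorem rrLevel_odd_even_le_succ (hn : 2 ≤ n) (hx : 1 ≤ x) {d : ℕ} (hd : 1 ≤ d)
    (hdn : d < 2 * n) :
    rrLevel n (2 * x + 1) ≤ rrLevel n (2 * (x + d)) + 1 ∧
      rrLevel n (2 * (x + d)) ≤ rrLevel n (2 * x + 1) + 1 := by
  rw [rrLevel_two_mul_add_one n hx, rrLevel_two_mul]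
  have hlo : (x - 1) / (n - 1) ≤ (x + d - 2) / (n - 1) := Nat.div_le_div_right (by omega)
  have hhi : (x + d - 2) / (n - 1) ≤ (x - 1) / (n - 1) + 2 := by
    rw [← Nat.add_mul_div_right _ _ (show 0 < n - 1 by omega)]
    exact Nat.div_le_div_right (by omega)
  omega

theorem div_le_rrLevel_two_mul_add_one (hn : 2 ≤ n) (hx1 : 1 ≤ x) (hx : M + 2 - 2 * n ≤ x) :
    (M - 1) / (n - 1) ≤ rrLevel n (2 * x + 1) := by
  rw [rrLevel_two_mul_add_one n hx1, ← Nat.add_mul_div_right _ _ (show 0 < n - 1 by omega)]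
  exact Nat.div_le_div_right (by omega)

theorem min_rrLevel_le_succ (hn : 2 ≤ n) (hM : 2 * n < M) {a b : ℕ}
    (h : rrRel n (2 * M) a b) :
    min (rrLevel n a) ((M - 1) / (n - 1) + 1) ≤ min (rrLevel n b) ((M - 1) / (n - 1) + 1) + 1 ∧
      min (rrLevel n b) ((M - 1) / (n - 1) + 1) ≤
        min (rrLevel n a) ((M - 1) / (n - 1) + 1) + 1 := by
  rcases rrRel_cases hM h with ⟨rfl, t, ht, htn, rfl⟩ | ⟨u, v, rfl, rfl, hu, hv, huv⟩ |
    ⟨x, d, rfl, rfl, hx, hd, hdn⟩ | ⟨x, y, rfl, rfl, hx, hy⟩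
  · rw [rrLevel_one, (rrLevel_two_mul_eq_one_iff hn).2 htn]
    omega
  · obtain ⟨_, _⟩ := rrLevel_two_mul_mem_Icc (x := u) hn (by omega)
    obtain ⟨_, _⟩ := rrLevel_two_mul_mem_Icc (x := v) hn (by omega)
    omega
  · have := rrLevel_odd_even_le_succ hn hx hd hdn
    omega
  · have := div_le_rrLevel_two_mul_add_one hn (by omega) hx
    have := div_le_rrLevel_two_mul_add_one hn (by omega) hy
    omega

theorem exists_odd_adj_two_mul (hn : 2 ≤ n) (hx : 2 * n ≤ x) (hxM : x ≤ M) :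
    ∃ y, 1 ≤ y ∧ y < x ∧ (rrGraph n (2 * M)).Adj (2 * y + 1) (2 * x) ∧
      rrLevel n (2 * y + 1) + 1 = rrLevel n (2 * x) := by
  have h2 : 2 ≤ (x - 2) / (n - 1) := (Nat.le_div_iff_mul_le (by omega)).2 (by omega)
  obtain ⟨D, hD⟩ : ∃ D, (x - 2) / (n - 1) = D + 2 := ⟨(x - 2) / (n - 1) - 2, by omega⟩
  obtain ⟨hlo, hhi⟩ := (Nat.div_eq_iff_mul_le_and_lt (by omega)).1 hD
  have e1 : (D + 1) * (n - 1) = D * (n - 1) + (n - 1) := by ring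
  have e2 : (D + 2) * (n - 1) = D * (n - 1) + 2 * (n - 1) := by ring
  have e3 : (D + 2 + 1) * (n - 1) = D * (n - 1) + 3 * (n - 1) := by ring
  have hlev : rrLevel n (2 * x) = D + 3 := by rw [rrLevel_two_mul, hD]
  have hwitness : ∀ y, 1 ≤ y → y < x → (x - y) % 2 = 1 → x - y < 2 * n →
      D * (n - 1) ≤ y - 1 → y - 1 < (D + 1) * (n - 1) →
      ∃ y, 1 ≤ y ∧ y < x ∧ (rrGraph n (2 * M)).Adj (2 * y + 1) (2 * x) ∧
        rrLevel n (2 * y + 1) + 1 = rrLevel n (2 * x) := by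
    intro y hy hyx hodd hdn hylo hyhi
    have hadj := rrGraph_adj_odd_two_mul (M := M) hy (Nat.odd_iff.2 hodd) hdn (by omega)
    rw [Nat.add_sub_cancel' hyx.le] at hadj
    exact ⟨y, hy, hyx, hadj, by rw [(rrLevel_two_mul_add_one_eq_iff hn hy).2 ⟨hylo, hyhi⟩, hlev]⟩
  -- the odd neighbour is the top of the window of level `D + 2`, or the one below it for parity
  rcases Nat.even_or_odd (x - (D * (n - 1) + (n - 1))) with h | h
  · rw [Nat.even_iff] at h
    exact hwitness (D * (n - 1) + n - 2) (by omega) (by omega) (by omega) (by omega) (by omega)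
      (by omega)
  · rw [Nat.odd_iff] at h
    exact hwitness (D * (n - 1) + (n - 1)) (by omega) (by omega) (by omega) (by omega) (by omega)
      (by omega)

theorem exists_adj_rrLevel_succ (hn : 2 ≤ n) (hM : 2 * n < M) {v : ℕ}
    (hv : v ∈ Set.Icc 1 (2 * M)) (hv1 : v ≠ 1) :
    ∃ u ∈ Set.Icc 1 (2 * M), (rrGraph n (2 * M)).Adj u v ∧ rrLevel n u + 1 = rrLevel n v := by
  rw [Set.mem_Icc] at hv
  obtain ⟨x, rfl | rfl⟩ := Nat.even_or_odd' v
  · rcases le_or_gt x n with hxn | hxn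
    · refine ⟨1, ⟨le_rfl, by omega⟩, rrGraph_adj_one_two_mul (by omega) (by omega) hxn, ?_⟩
      rw [rrLevel_one, (rrLevel_two_mul_eq_one_iff hn).2 hxn]
    rcases lt_or_ge x (2 * n) with hx2n | hx2n
    · have hadj := rrGraph_adj_two_mul hM (j := x - n) (t := n) (by omega) (by omega) le_rfl
      rw [show n + (x - n) = x by omega] at hadj
      refine ⟨2 * (n - (x - n)), ⟨by omega, by omega⟩, hadj, ?_⟩
      rw [(rrLevel_two_mul_eq_one_iff hn).2 (by omega),
        (rrLevel_two_mul_eq_iff (q := 1) hn).2 (by omega)]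
    · obtain ⟨y, hy, hyx, hadj, hlev⟩ := exists_odd_adj_two_mul (M := M) hn hx2n (by omega)
      exact ⟨2 * y + 1, ⟨by omega, by omega⟩, hadj, hlev⟩
  · have hx : 1 ≤ x := by omega
    refine ⟨2 * (x + 1), ⟨by omega, by omega⟩,
      (rrGraph_adj_odd_two_mul hx odd_one (by omega) (by omega)).symm, ?_⟩
    rw [rrLevel_two_mul, rrLevel_two_mul_add_one n hx, show x + 1 - 2 = x - 1 by omega]

theorem min_dist_eq_min_rrLevel (hn : 2 ≤ n) (hM : 2 * n < M) {v : ℕ}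
    (hv : v ∈ Set.Icc 1 (2 * M)) :
    min ((rrGraph n (2 * M)).dist 1 v) ((M - 1) / (n - 1) + 1) =
      min (rrLevel n v) ((M - 1) / (n - 1) + 1) := by
  obtain ⟨p, hp⟩ := SimpleGraph.exists_walk_length_eq_of_exists_adj_pred (rrLevel_one n)
    (fun _ hv hv1 => exists_adj_rrLevel_succ hn hM hv hv1) hv
  have hle := SimpleGraph.dist_le p
  have hge := SimpleGraph.Reachable.apply_le_apply_add_dist
    (f := fun v => min (rrLevel n v) ((M - 1) / (n - 1) + 1)) (fun a b h => ?_) ⟨p⟩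
  · simp only [rrLevel_one] at hge
    omega
  · rcases ((SimpleGraph.fromRel_adj _ _ _).1 h).2 with hab | hba
    exacts [(min_rrLevel_le_succ hn hM hab).2, (min_rrLevel_le_succ hn hM hba).1]

theorem filter_dist_eq_filter_rrLevel (hn : 2 ≤ n) (hM : 2 * n < M)
    (hq : q ≤ (M - 1) / (n - 1)) :
    (Finset.Icc 1 (2 * M)).filter (fun i => (rrGraph n (2 * M)).dist 1 i = q) =
      (Finset.Icc 1 (2 * M)).filter (fun i => rrLevel n i = q) := by
  refine Finset.filter_congr fun v hv => ?_
  have := min_dist_eq_min_rrLevel hn hM (v := v) (by simpa using hv)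
  omega

theorem filter_rrLevel_eq_zero (hM : 0 < M) :
    (Finset.Icc 1 (2 * M)).filter (fun i => rrLevel n i = 0) = {1} := by
  ext v
  simp only [Finset.mem_filter, Finset.mem_Icc, Finset.mem_singleton]
  constructor
  · rintro ⟨-, hv⟩
    by_contra hv1
    unfold rrLevel at hv
    split_ifs at hv
  · rintro rfl
    exact ⟨⟨le_rfl, by omega⟩, rrLevel_one n⟩

theorem filter_rrLevel_eq_one (hn : 2 ≤ n) (hnM : n ≤ M) :
    (Finset.Icc 1 (2 * M)).filter (fun i => rrLevel n i = 1) =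
      (Finset.Icc 1 n).image (fun x => 2 * x) := by
  ext v
  simp only [Finset.mem_filter, Finset.mem_Icc, Finset.mem_image]
  obtain ⟨x, rfl | rfl⟩ := Nat.even_or_odd' v
  · rw [rrLevel_two_mul_eq_one_iff hn]
    constructor
    · rintro ⟨hx, hxn⟩
      exact ⟨x, by omega, rfl⟩
    · rintro ⟨y, hy, hyx⟩
      omega
  · constructor
    · rintro ⟨hx, hlev⟩
      rcases Nat.eq_zero_or_pos x with rfl | hx1
      · exact absurd hlev (by simp [rrLevel_one])
      · have := two_le_rrLevel_two_mul_add_one n hx1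
        omega
    · rintro ⟨y, -, hy⟩
      omega

/-- The set `V_q` of the theorem, for `q ≥ 2`. -/
def rrLayer (n q : ℕ) : Finset ℕ :=
  (Finset.Icc ((q - 2) * (n - 1) + 1) ((q - 1) * (n - 1))).image (fun x => 2 * x + 1) ∪
    (Finset.Icc (2 + (q - 1) * (n - 1)) (1 + q * (n - 1))).image (fun x => 2 * x)

theorem filter_rrLevel_eq (hn : 2 ≤ n) (hq : 2 ≤ q) (hqM : q ≤ (M - 1) / (n - 1)) :
    (Finset.Icc 1 (2 * M)).filter (fun i => rrLevel n i = q) = rrLayer n q := by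
  obtain ⟨p, rfl⟩ : ∃ p, q = p + 2 := ⟨q - 2, by omega⟩
  have hpM := (Nat.le_div_iff_mul_le (by omega)).1 hqM
  have e1 : (p + 1) * (n - 1) = p * (n - 1) + (n - 1) := by ring
  have e2 : (p + 2) * (n - 1) = p * (n - 1) + 2 * (n - 1) := by ring
  have e2' : (p + 1 + 1) * (n - 1) = p * (n - 1) + 2 * (n - 1) := by ring
  simp only [rrLayer, Nat.add_sub_cancel, show p + 2 - 1 = p + 1 from rfl]
  ext v
  simp only [Finset.mem_filter, Finset.mem_Icc, Finset.mem_union, Finset.mem_image]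
  obtain ⟨x, rfl | rfl⟩ := Nat.even_or_odd' v
  · rw [(rrLevel_two_mul_eq_iff (q := p + 1) hn : rrLevel n (2 * x) = p + 2 ↔ _)]
    constructor
    · rintro ⟨-, hlo, hhi⟩
      exact Or.inr ⟨x, ⟨by omega, by omega⟩, rfl⟩
    · rintro (⟨y, -, hy⟩ | ⟨y, hy, hyx⟩) <;> omega
  · rcases Nat.eq_zero_or_pos x with rfl | hx
    · rw [show rrLevel n (2 * 0 + 1) = 0 from rrLevel_one n]
      constructor
      · omega
      · rintro (⟨y, hy, hyx⟩ | ⟨y, -, hy⟩) <;> omega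
    rw [rrLevel_two_mul_add_one_eq_iff hn hx]
    constructor
    · rintro ⟨-, hlo, hhi⟩
      exact Or.inl ⟨x, ⟨by omega, by omega⟩, rfl⟩
    · rintro (⟨y, hy, hyx⟩ | ⟨y, -, hy⟩) <;> omega

theorem card_rrLayer (hq : 2 ≤ q) : (rrLayer n q).card = 2 * (n - 1) := by
  have hodd : Function.Injective (fun x : ℕ => 2 * x + 1) := fun a b h => by
    simp only at h
    omega
  rw [rrLayer, Finset.card_union_of_disjoint ?_, Finset.card_image_of_injective _ hodd,
    Finset.card_image_of_injective _ (mul_right_injective₀ two_ne_zero), Nat.card_Icc,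
    Nat.card_Icc]
  · obtain ⟨p, rfl⟩ : ∃ p, q = p + 2 := ⟨q - 2, by omega⟩
    have e1 : (p + 1) * (n - 1) = p * (n - 1) + (n - 1) := by ring
    have e2 : (p + 2) * (n - 1) = p * (n - 1) + 2 * (n - 1) := by ring
    simp only [Nat.add_sub_cancel, show p + 2 - 1 = p + 1 from rfl]
    omega
  · simp only [Finset.disjoint_left, Finset.mem_image]
    rintro _ ⟨x, -, rfl⟩ ⟨y, -, hxy⟩
    omega

end

theorem rr_distance_layers (n N : ℕ) (hN : Even N) (hn : 2 ≤ n) (hnN : 4 * n < N) :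
    letI Q := (N / 2 - 1) / (n - 1)
    letI Vq := fun q : ℕ => (Finset.Icc 1 N).filter fun i => (rrGraph n N).dist 1 i = q
    (Vq 0).card = 1 ∧ (Vq 1).card = n ∧
      Vq 1 = (Finset.Icc 1 n).image (fun x => 2 * x) ∧
      ∀ q, 2 ≤ q → q ≤ Q →
        (Vq q).card = 2 * (n - 1) ∧
        Vq q = (Finset.Icc ((q - 2) * (n - 1) + 1) ((q - 1) * (n - 1))).image
                 (fun x => 2 * x + 1) ∪
               (Finset.Icc (2 + (q - 1) * (n - 1)) (1 + q * (n - 1))).image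
                 (fun x => 2 * x) := by
  obtain ⟨M, rfl⟩ := hN.two_dvd
  have hM : 2 * n < M := by omega
  have hK : 2 ≤ (M - 1) / (n - 1) := (Nat.le_div_iff_mul_le (by omega)).2 (by omega)
  simp only [Nat.mul_div_cancel_left M two_pos]
  rw [filter_dist_eq_filter_rrLevel hn hM (by omega),
    filter_dist_eq_filter_rrLevel hn hM (by omega),
    filter_rrLevel_eq_zero (by omega), filter_rrLevel_eq_one hn (by omega),
    Finset.card_image_of_injective _ (mul_right_injective₀ two_ne_zero)]
  refine ⟨rfl, by simp, rfl, fun q hq2 hqK => ?_⟩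
  rw [filter_dist_eq_filter_rrLevel hn hM hqK, filter_rrLevel_eq hn hq2 hqK]
  exact ⟨card_rrLayer hq2, rfl⟩
end
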